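/- arXiv:1106.1484 — 8 statements merged into one kernel-verified Lean document; each statement's English description precedes it below -/
import Mathlib

section
/- For a labeled graph (E, L) and functions c, d : E^1 → G into a group G, if (E, L) is left-resolving then the skew product labeled graph (E ×_c G, L_d) is left-resolving. -/
structure DirGraph (V E : Type*) where
  r : E → V
  s : E → V

/-- The skew product graph `E ×_c G`. -/
def skewGraph {V E Γ : Type*} [Group Γ] (G : DirGraph V E) (c : E → Γ) :
    DirGraph (V × Γ) (E × Γ) where
  r p := (G.r p.1, p.2 * c p.1)
  s p := (G.s p.1, p.2)

/-- The labeling `ℒ_d` on the skew product graph. -/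
def skewLabel {E Λ Γ : Type*} [Group Γ] (ℒ : E → Λ) (d : E → Γ) : E × Γ → Λ × Γ :=
  fun p => (ℒ p.1, p.2 * d p.1)

/-- A labeled graph is left-resolving if the labeling is injective on edges into each vertex. -/
def LeftResolving {V E Λ : Type*} (G : DirGraph V E) (ℒ : E → Λ) : Prop :=
  ∀ v : V, Set.InjOn ℒ { e | G.r e = v }

/-- If `(E, ℒ)` is left-resolving, so is the skew product labeled graph `(E ×_c G, ℒ_d)`. -/
theorem stmt1 {V E Λ Γ : Type*} [Group Γ] (G : DirGraph V E) (ℒ : E → Λ)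
    (c d : E → Γ) (h : LeftResolving G ℒ) :
    LeftResolving (skewGraph G c) (skewLabel ℒ d) := by
  rintro ⟨v, γ⟩ ⟨e₁, g₁⟩ h₁ ⟨e₂, g₂⟩ h₂ hlab
  obtain ⟨hℒ, hd⟩ := Prod.mk.inj hlab
  obtain rfl : e₁ = e₂ := h v (congrArg Prod.fst h₁) (congrArg Prod.fst h₂) hℒ
  exact congrArg _ (mul_right_cancel hd)
end

section
/- (Gross–Tucker theorem for labeled graphs.) Let ((E, L), G, α) be a free labeled graph action. Then there exist functions c, d : (E/G)^1 → G such that ((E, L), G, α) is isomorphic, as a labeled graph action, to the left translation action of G on the skew product labeled graph ((E/G) ×_c G, (L/G)_d). -/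
/-- An action of a group `Γ` on a labeled graph `(E, ℒ)`: compatible actions on
vertices, edges and the alphabet. -/
structure LGAction (Γ V E Λ : Type*) [Group Γ] (G : DirGraph V E) (ℒ : E → Λ) where
  onV : Γ →* Equiv.Perm V
  onE : Γ →* Equiv.Perm E
  onA : Γ →* Equiv.Perm Λ
  compat_r : ∀ g x, onV g (G.r x) = G.r (onE g x)
  compat_s : ∀ g x, onV g (G.s x) = G.s (onE g x)
  compat_l : ∀ g x, ℒ (onE g x) = onA g (ℒ x)

variable {Γ V E Λ : Type*} [Group Γ] {G : DirGraph V E} {ℒ : E → Λ}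

/-- Orbit relation on vertices. -/
def orbV (α : LGAction Γ V E Λ G ℒ) : V → V → Prop := fun v w => ∃ g, α.onV g v = w

/-- Orbit relation on edges. -/
def orbE (α : LGAction Γ V E Λ G ℒ) : E → E → Prop := fun e f => ∃ g, α.onE g e = f

/-- Orbit relation on the alphabet. -/
def orbA (α : LGAction Γ V E Λ G ℒ) : Λ → Λ → Prop := fun a b => ∃ g, α.onA g a = b

namespace GrossTucker

variable {X Y : Type*} (β : Γ →* Equiv.Perm X) (γ : Γ →* Equiv.Perm Y)

-- `orbV α`, `orbE α` and `orbA α` are definitionally `orbRel` of `α.onV`, `α.onE`, `α.onA`.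
def orbRel : X → X → Prop := fun x y => ∃ g, β g x = y

def IsFree : Prop := ∀ g x, β g x = x → g = 1

def IsEquivariant (f : X → Y) : Prop := ∀ g x, f (β g x) = γ g (f x)

def spread (rep : Quot (orbRel β) → X) (p : Quot (orbRel β) × Γ) : X := β p.2 (rep p.1)

variable {β γ}

theorem orbRel_equivalence : Equivalence (orbRel β) where
  refl x := ⟨1, by simp⟩
  symm := fun ⟨g, hg⟩ => ⟨g⁻¹, by rw [← hg, ← Equiv.Perm.mul_apply, ← map_mul]; simp⟩
  trans := fun ⟨g, hg⟩ ⟨k, hk⟩ => ⟨k * g, by rw [map_mul, Equiv.Perm.mul_apply, hg, hk]⟩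

theorem quot_mk_eq_iff {x y : X} :
    Quot.mk (orbRel β) x = Quot.mk (orbRel β) y ↔ ∃ g, β g x = y :=
  ⟨fun h => orbRel_equivalence.eqvGen_iff.mp (Quot.eqvGen_exact h), fun h => Quot.sound h⟩

theorem exists_apply_rep_eq {rep : Quot (orbRel β) → X}
    (hrep : ∀ x, Quot.mk (orbRel β) (rep x) = x) (x : X) :
    ∃ g, β g (rep (Quot.mk (orbRel β) x)) = x :=
  quot_mk_eq_iff.mp (hrep _)

theorem IsEquivariant.quot_mk_eq {f : X → Y} (hf : IsEquivariant β γ f) {x x' : X}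
    (h : Quot.mk (orbRel β) x = Quot.mk (orbRel β) x') :
    Quot.mk (orbRel γ) (f x) = Quot.mk (orbRel γ) (f x') := by
  obtain ⟨g, rfl⟩ := quot_mk_eq_iff.mp h
  exact Quot.sound ⟨g, (hf g x).symm⟩

theorem IsEquivariant.isFree {f : X → Y} (hf : IsEquivariant β γ f) (hfree : IsFree γ) :
    IsFree β := fun g x hx => hfree g (f x) (by rw [← hf, hx])

theorem spread_mul (rep : Quot (orbRel β) → X) (g : Γ) (x : Quot (orbRel β)) (h : Γ) :
    spread β rep (x, g * h) = β g (spread β rep (x, h)) := by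
  simp only [spread, map_mul, Equiv.Perm.mul_apply]

theorem bijective_spread (hfree : IsFree β) {rep : Quot (orbRel β) → X}
    (hrep : ∀ x, Quot.mk (orbRel β) (rep x) = x) : Function.Bijective (spread β rep) := by
  constructor
  · rintro ⟨x, g⟩ ⟨y, h⟩ he
    have hmove : β (h⁻¹ * g) (rep x) = rep y := by
      rw [map_mul, Equiv.Perm.mul_apply, ← Equiv.Perm.eq_inv_iff_eq, ← map_inv, inv_inv]
      exact he
    obtain rfl : x = y := by rw [← hrep x, ← hrep y]; exact Quot.sound ⟨_, hmove⟩
    obtain rfl : g = h := (inv_mul_eq_one.mp (hfree _ _ hmove)).symm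
    rfl
  · intro x
    obtain ⟨g, hg⟩ := exists_apply_rep_eq hrep x
    exact ⟨(Quot.mk _ x, g), hg⟩

theorem exists_rep_map_eq_rep {f : X → Y} (hf : IsEquivariant β γ f)
    {repY : Quot (orbRel γ) → Y} (hrepY : ∀ y, Quot.mk (orbRel γ) (repY y) = y) :
    ∃ rep : Quot (orbRel β) → X, (∀ x, Quot.mk (orbRel β) (rep x) = x) ∧
      ∀ x, f (rep x) = repY (Quot.mk (orbRel γ) (f (rep x))) := by
  have hmove (x : Quot (orbRel β)) : ∃ g, γ g (f x.out) = repY (Quot.mk _ (f x.out)) :=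
    quot_mk_eq_iff.mp (hrepY _).symm
  choose t ht using hmove
  refine ⟨fun x => β (t x) x.out, fun x => (Quot.sound ⟨t x, rfl⟩).symm.trans x.out_eq,
    fun x => ?_⟩
  rw [hf, ht, hrepY]

/-- In orbit–group coordinates, `f` is the skew product map `(x̄, g) ↦ (f̄ x̄, g * t x̄)`. -/
theorem IsEquivariant.map_spread {f : X → Y} (hf : IsEquivariant β γ f)
    {repX : Quot (orbRel β) → X} (hrepX : ∀ x, Quot.mk (orbRel β) (repX x) = x)
    {repY : Quot (orbRel γ) → Y} {t : Quot (orbRel β) → Γ}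
    (ht : ∀ x, γ (t x) (repY (Quot.mk (orbRel γ) (f (repX x)))) = f (repX x)) (x : X) (g : Γ) :
    f (spread β repX (Quot.mk _ x, g)) =
      spread γ repY (Quot.mk _ (f x), g * t (Quot.mk _ x)) := by
  have horbit : Quot.mk (orbRel γ) (f x) = Quot.mk _ (f (repX (Quot.mk _ x))) :=
    hf.quot_mk_eq (hrepX _).symm
  rw [spread, hf, spread_mul, spread, horbit, ht]

end GrossTucker

open GrossTucker

/-- Gross–Tucker theorem for labeled graphs: a free labeled graph action
`((E, ℒ), Γ, α)` is isomorphic, as a labeled graph action, to the left translation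
action of `Γ` on a skew product labeled graph `((E/Γ) ×_c Γ, (ℒ/Γ)_d)` for suitable
functions `c, d : (E/Γ)¹ → Γ`. The isomorphism is expressed by bijections
`φ⁰, φ¹, φ^Λ` intertwining range, source and labeling (computed on orbit
representatives) and equivariant for left translation. -/
theorem stmt6 (α : LGAction Γ V E Λ G ℒ)
    (hfreeV : ∀ (g : Γ) (v : V), α.onV g v = v → g = 1)
    (hfreeA : ∀ (g : Γ) (a : Λ), α.onA g a = a → g = 1) :
    ∃ (c d : Quot (orbE α) → Γ)
      (φ0 : Quot (orbV α) × Γ → V) (φ1 : Quot (orbE α) × Γ → E)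
      (φA : Quot (orbA α) × Γ → Λ),
      Function.Bijective φ0 ∧ Function.Bijective φ1 ∧ Function.Bijective φA ∧
      (∀ (e : E) (g : Γ),
        G.s (φ1 (Quot.mk (orbE α) e, g)) = φ0 (Quot.mk (orbV α) (G.s e), g)) ∧
      (∀ (e : E) (g : Γ),
        G.r (φ1 (Quot.mk (orbE α) e, g)) =
          φ0 (Quot.mk (orbV α) (G.r e), g * c (Quot.mk (orbE α) e))) ∧
      (∀ (e : E) (g : Γ),
        ℒ (φ1 (Quot.mk (orbE α) e, g)) =
          φA (Quot.mk (orbA α) (ℒ e), g * d (Quot.mk (orbE α) e))) ∧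
      (∀ (g : Γ) (x : Quot (orbV α)) (h : Γ), φ0 (x, g * h) = α.onV g (φ0 (x, h))) ∧
      (∀ (g : Γ) (x : Quot (orbE α)) (h : Γ), φ1 (x, g * h) = α.onE g (φ1 (x, h))) ∧
      (∀ (g : Γ) (x : Quot (orbA α)) (h : Γ), φA (x, g * h) = α.onA g (φA (x, h))) := by
  have hs : IsEquivariant α.onE α.onV G.s := fun g e => (α.compat_s g e).symm
  have hr : IsEquivariant α.onE α.onV G.r := fun g e => (α.compat_r g e).symm
  have hl : IsEquivariant α.onE α.onA ℒ := α.compat_l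
  obtain ⟨repE, hrepE, hsrc⟩ := exists_rep_map_eq_rep hs (repY := Quot.out) Quot.out_eq
  choose c hc using fun x => exists_apply_rep_eq (β := α.onV) Quot.out_eq (G.r (repE x))
  choose d hd using fun x => exists_apply_rep_eq (β := α.onA) Quot.out_eq (ℒ (repE x))
  refine ⟨c, d, spread α.onV Quot.out, spread α.onE repE, spread α.onA Quot.out,
    bijective_spread hfreeV Quot.out_eq, bijective_spread (hs.isFree hfreeV) hrepE,
    bijective_spread hfreeA Quot.out_eq, fun e g => ?_, hr.map_spread hrepE hc,
    hl.map_spread hrepE hd, spread_mul _, spread_mul _, spread_mul _⟩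
  have hsrc' := hs.map_spread hrepE (t := fun _ => 1) (fun x => by simpa using (hsrc x).symm) e g
  rw [mul_one] at hsrc'
  exact hsrc'
end

section
/- Let (E, L) be a labeled graph, c, d : E^1 → G functions, and ((E ×_c G, L_d), G, τ) the left translation action on the skew product labeled graph. Then the quotient labeled graph ((E ×_c G)/G, L_d/G) is isomorphic to (E, L) as labeled graphs. -/
/-- Orbit relation of the left translation action on `X × Γ`. -/
def transOrb (X : Type*) (Γ : Type*) [Group Γ] : X × Γ → X × Γ → Prop :=
  fun p q => ∃ g : Γ, (p.1, g * p.2) = q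

section TranslationOrbits

variable {X Γ : Type*} [Group Γ]

lemma transOrb_iff_fst_eq {p q : X × Γ} : transOrb X Γ p q ↔ p.1 = q.1 := by
  constructor
  · rintro ⟨g, rfl⟩
    rfl
  · intro h
    exact ⟨q.2 * p.2⁻¹, Prod.ext h (by simp)⟩

def transOrbFst : Quot (transOrb X Γ) → X :=
  Quot.lift Prod.fst fun _ _ => transOrb_iff_fst_eq.mp

lemma transOrbFst_bijective : Function.Bijective (transOrbFst : Quot (transOrb X Γ) → X) := by
  constructor
  · rintro ⟨p⟩ ⟨q⟩ h
    exact Quot.sound (transOrb_iff_fst_eq.mpr h)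
  · exact fun x => ⟨Quot.mk _ (x, 1), rfl⟩

end TranslationOrbits

/-- The quotient of the skew product labeled graph `(E ×_c Γ, ℒ_d)` by the left
translation action is isomorphic to `(E, ℒ)` as labeled graphs. -/
theorem stmt7 {V E Λ Γ : Type*} [Group Γ] (G : DirGraph V E) (ℒ : E → Λ)
    (c d : E → Γ) :
    ∃ (ψ0 : Quot (transOrb V Γ) → V) (ψ1 : Quot (transOrb E Γ) → E)
      (ψA : Quot (transOrb Λ Γ) → Λ),
      Function.Bijective ψ0 ∧ Function.Bijective ψ1 ∧ Function.Bijective ψA ∧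
      (∀ p : E × Γ,
        ψ0 (Quot.mk (transOrb V Γ) ((skewGraph G c).r p)) =
          G.r (ψ1 (Quot.mk (transOrb E Γ) p))) ∧
      (∀ p : E × Γ,
        ψ0 (Quot.mk (transOrb V Γ) ((skewGraph G c).s p)) =
          G.s (ψ1 (Quot.mk (transOrb E Γ) p))) ∧
      (∀ p : E × Γ,
        ψA (Quot.mk (transOrb Λ Γ) (skewLabel ℒ d p)) =
          ℒ (ψ1 (Quot.mk (transOrb E Γ) p))) :=
  ⟨transOrbFst, transOrbFst, transOrbFst, transOrbFst_bijective, transOrbFst_bijective,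
    transOrbFst_bijective, fun _ => rfl, fun _ => rfl, fun _ => rfl⟩
end

section
/- Let (E, L) be a labeled graph and c : E^1 → G a function. If d_1, d_2 : E^1 → G are both label consistent (d_i = D_i ∘ L for functions D_i : A → G), then the left translation actions ((E ×_c G, L_{d_1}), G, τ) and ((E ×_c G, L_{d_2}), G, τ) are isomorphic as labeled graph actions, via the identity on vertices and edges and the alphabet map (a, g) ↦ (a, g D_1(a)^{-1} D_2(a)). -/
/-- With `k a = D₁(a)⁻¹ D₂(a)` this is the alphabet map `(a, g) ↦ (a, g D₁(a)⁻¹ D₂(a))`;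
label consistency makes the correction factor depend on the letter only. -/
def relabel {Λ Γ : Type*} [Group Γ] (k : Λ → Γ) (p : Λ × Γ) : Λ × Γ :=
  (p.1, p.2 * k p.1)

section Relabel

variable {Λ Γ : Type*} [Group Γ]

theorem relabel_bijective (k : Λ → Γ) : Function.Bijective (relabel k) :=
  (Equiv.prodShear (Equiv.refl Λ) fun a => Equiv.mulRight (k a)).bijective

theorem relabel_skewLabel {E : Type*} (ℒ : E → Λ) (d : E → Γ) (k : Λ → Γ) (p : E × Γ) :
    relabel k (skewLabel ℒ d p) = skewLabel ℒ (fun e => d e * k (ℒ e)) p := by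
  simp [relabel, skewLabel, mul_assoc]

theorem relabel_mul_left (k : Λ → Γ) (h : Γ) (p : Λ × Γ) :
    relabel k (p.1, h * p.2) = ((relabel k p).1, h * (relabel k p).2) := by
  simp [relabel, mul_assoc]

end Relabel

theorem stmt8_general {E Λ Γ : Type*} [Group Γ] (ℒ : E → Λ)
    (d₁ d₂ : E → Γ) (D₁ D₂ : Λ → Γ)
    (h₁ : d₁ = D₁ ∘ ℒ) (h₂ : d₂ = D₂ ∘ ℒ) :
    let φA : Λ × Γ → Λ × Γ := fun p => (p.1, p.2 * (D₁ p.1)⁻¹ * D₂ p.1)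
    Function.Bijective φA ∧
    -- the identity on edges together with `φA` intertwines the labelings:
    (∀ p : E × Γ, φA (skewLabel ℒ d₁ p) = skewLabel ℒ d₂ p) ∧
    -- the identity on vertices/edges trivially intertwines range and source, and
    -- `φA` is equivariant for left translation:
    (∀ (h : Γ) (p : Λ × Γ), φA (p.1, h * p.2) = ((φA p).1, h * (φA p).2)) := by
  intro φA
  have hφ : φA = relabel fun a => (D₁ a)⁻¹ * D₂ a := by
    funext p
    simp [φA, relabel, mul_assoc]
  have hd : d₂ = fun e => d₁ e * ((D₁ (ℒ e))⁻¹ * D₂ (ℒ e)) := by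
    funext e
    simp [h₁, h₂]
  rw [hφ]
  exact ⟨relabel_bijective _, fun p => by rw [relabel_skewLabel, hd], relabel_mul_left _⟩

/-- If `d₁, d₂ : E¹ → Γ` are label consistent, then the left translation actions on
`(E ×_c Γ, ℒ_{d₁})` and `(E ×_c Γ, ℒ_{d₂})` are isomorphic as labeled graph actions,
via the identity on vertices and edges and the alphabet map
`(a, g) ↦ (a, g D₁(a)⁻¹ D₂(a))`. -/
theorem stmt8 {V E Λ Γ : Type*} [Group Γ] (G : DirGraph V E) (ℒ : E → Λ)
    (c d₁ d₂ : E → Γ) (D₁ D₂ : Λ → Γ)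
    (h₁ : d₁ = D₁ ∘ ℒ) (h₂ : d₂ = D₂ ∘ ℒ) :
    let φA : Λ × Γ → Λ × Γ := fun p => (p.1, p.2 * (D₁ p.1)⁻¹ * D₂ p.1)
    Function.Bijective φA ∧
    -- the identity on edges together with `φA` intertwines the labelings:
    (∀ p : E × Γ, φA (skewLabel ℒ d₁ p) = skewLabel ℒ d₂ p) ∧
    -- the identity on vertices/edges trivially intertwines range and source, and
    -- `φA` is equivariant for left translation:
    (∀ (h : Γ) (p : Λ × Γ), φA (p.1, h * p.2) = ((φA p).1, h * (φA p).2)) :=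
  stmt8_general ℒ d₁ d₂ D₁ D₂ h₁ h₂
end

section
/- Let (E, L) be a labeled graph and c : E^1 → G label consistent with c = C ∘ L. Then the map sending the labeled path L_1(μ, g) of the skew product labeled graph (E ×_c G, L_1) to the pair (L(μ), g) is a well-defined bijection from the set of labeled paths of (E ×_c G, L_1) onto L^+(E) × G, where 1 : E^1 → G is the constant function with value 1_G. -/
def IsPath {V E : Type*} (G : DirGraph V E) (l : List E) : Prop :=
  l ≠ [] ∧ List.Chain' (fun e f => G.r e = G.s f) l

def IsLabeledPath {V E Λ : Type*} (G : DirGraph V E) (ℒ : E → Λ) (β : List Λ) : Prop :=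
  ∃ l, IsPath G l ∧ l.map ℒ = β

/-!
A path of the skew product is determined by its first edge's group element and its
projection to `E`: each later group element is the previous one times the cocycle value.
When `c = C ∘ ℒ` the cocycle can be read off the labels, so the same recursion reconstructs
an `ℒ_𝟏`-labeled word from its projection to `Λ` and its first group element, and this
reconstruction inverts the map `ℒ_𝟏(μ, g) ↦ (ℒ(μ), g)`.
-/

/-- `skewLift c μ g` is the path `(μ, g)` of the skew product: `(μ₁, g) (μ₂, g c(μ₁)) ⋯`. -/
def skewLift {α Γ : Type*} [Group Γ] (c : α → Γ) : List α → Γ → List (α × Γ)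
  | [], _ => []
  | a :: μ, g => (a, g) :: skewLift c μ (g * c a)

section SkewLift

variable {V E Λ Γ : Type*} [Group Γ]

theorem map_fst_skewLift {α : Type*} (c : α → Γ) :
    ∀ (μ : List α) (g : Γ), (skewLift c μ g).map Prod.fst = μ
  | [], _ => rfl
  | a :: μ, g => by simp [skewLift, map_fst_skewLift c μ]

theorem head?_map_snd_skewLift {α : Type*} (c : α → Γ) {μ : List α} (hμ : μ ≠ []) (g : Γ) :
    (skewLift c μ g).head?.map Prod.snd = some g := by
  obtain ⟨a, μ, rfl⟩ := List.exists_cons_of_ne_nil hμ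
  rfl

theorem isChain_skewLift (G : DirGraph V E) (c : E → Γ) :
    ∀ (μ : List E) (g : Γ), μ.IsChain (fun e f => G.r e = G.s f) →
      (skewLift c μ g).IsChain (fun p q => (skewGraph G c).r p = (skewGraph G c).s q)
  | [], _, _ => List.isChain_nil
  | [_], _, _ => List.isChain_singleton _
  | e :: f :: μ, g, h => by
    rw [List.isChain_cons_cons] at h
    exact List.isChain_cons_cons.2
      ⟨by simp [skewGraph, h.1], isChain_skewLift G c (f :: μ) (g * c e) h.2⟩

theorem eq_skewLift_of_isChain (G : DirGraph V E) (c : E → Γ) :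
    ∀ (e : E) (g : Γ) (p : List (E × Γ)),
      ((e, g) :: p).IsChain (fun p q => (skewGraph G c).r p = (skewGraph G c).s q) →
        (e, g) :: p = skewLift c (e :: p.map Prod.fst) g
  | _, _, [], _ => rfl
  | e, g, (f, h) :: p, hp => by
    rw [List.isChain_cons_cons] at hp
    have hh : h = g * c e := (congrArg Prod.snd hp.1).symm
    subst hh
    exact congrArg ((e, g) :: ·) (eq_skewLift_of_isChain G c f _ p hp.2)

theorem map_skewLabel_skewLift (ℒ : E → Λ) (C : Λ → Γ) :
    ∀ (μ : List E) (g : Γ),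
      (skewLift (C ∘ ℒ) μ g).map (skewLabel ℒ fun _ => (1 : Γ)) = skewLift C (μ.map ℒ) g
  | [], _ => rfl
  | e :: μ, g => by
    simp [skewLift, skewLabel, map_skewLabel_skewLift ℒ C μ]

theorem IsLabeledPath.ne_nil {G : DirGraph V E} {ℒ : E → Λ} {β : List Λ}
    (h : IsLabeledPath G ℒ β) : β ≠ [] := by
  obtain ⟨μ, ⟨hμ, -⟩, rfl⟩ := h
  simpa using hμ

theorem isPath_skewGraph_iff (G : DirGraph V E) (c : E → Γ) (p : List (E × Γ)) :
    IsPath (skewGraph G c) p ↔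
      ∃ μ g, IsPath G μ ∧ p = skewLift c μ g := by
  constructor
  · rintro ⟨hne, hp⟩
    obtain ⟨⟨e, g⟩, p, rfl⟩ := List.exists_cons_of_ne_nil hne
    refine ⟨e :: p.map Prod.fst, g, ⟨List.cons_ne_nil _ _, ?_⟩,
      eq_skewLift_of_isChain G c e g p hp⟩
    exact List.isChain_map_of_isChain (S := fun e f => G.r e = G.s f) Prod.fst
      (fun _ _ h => congrArg Prod.fst h) hp
  · rintro ⟨μ, g, ⟨hne, hμ⟩, rfl⟩
    refine ⟨?_, isChain_skewLift G c μ g hμ⟩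
    obtain ⟨e, μ, rfl⟩ := List.exists_cons_of_ne_nil hne
    simp [skewLift]

theorem isLabeledPath_skewGraph_iff (G : DirGraph V E) (ℒ : E → Λ) (C : Λ → Γ)
    (w : List (Λ × Γ)) :
    IsLabeledPath (skewGraph G (C ∘ ℒ)) (skewLabel ℒ fun _ => (1 : Γ)) w ↔
      ∃ β g, IsLabeledPath G ℒ β ∧ skewLift C β g = w := by
  simp only [IsLabeledPath, isPath_skewGraph_iff]
  constructor
  · rintro ⟨_, ⟨μ, g, hμ, rfl⟩, rfl⟩
    exact ⟨μ.map ℒ, g, ⟨μ, hμ, rfl⟩, (map_skewLabel_skewLift ℒ C μ g).symm⟩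
  · rintro ⟨_, g, ⟨μ, hμ, rfl⟩, rfl⟩
    exact ⟨_, ⟨μ, g, hμ, rfl⟩, map_skewLabel_skewLift ℒ C μ g⟩

end SkewLift

/-- If `c = C ∘ ℒ` is label consistent, then the map sending a labeled path
`ℒ_𝟏(μ, g)` of `(E ×_c Γ, ℒ_𝟏)` to `(ℒ(μ), g)` is a well-defined bijection from the
set of labeled paths of `(E ×_c Γ, ℒ_𝟏)` onto `ℒ⁺(E) × Γ`. -/
theorem stmt9 {V E Λ Γ : Type*} [Group Γ] (G : DirGraph V E) (ℒ : E → Λ)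
    (c : E → Γ) (C : Λ → Γ) (hc : c = C ∘ ℒ) :
    Set.BijOn
      (fun w : List (Λ × Γ) => ((w.map Prod.fst, (w.head?.map Prod.snd).getD 1) : List Λ × Γ))
      { w | IsLabeledPath (skewGraph G c) (skewLabel ℒ fun _ => (1 : Γ)) w }
      { p : List Λ × Γ | IsLabeledPath G ℒ p.1 } := by
  subst hc
  have hsrc := isLabeledPath_skewGraph_iff G ℒ C
  refine Set.InvOn.bijOn (f' := fun p => skewLift C p.1 p.2) ⟨?_, ?_⟩ ?_ ?_
  · intro w hw
    obtain ⟨β, g, hβ, rfl⟩ := (hsrc w).1 hw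
    simp [map_fst_skewLift, head?_map_snd_skewLift C hβ.ne_nil]
  · rintro ⟨β, g⟩ hβ
    simp [map_fst_skewLift, head?_map_snd_skewLift C (IsLabeledPath.ne_nil hβ)]
  · intro w hw
    obtain ⟨β, g, hβ, rfl⟩ := (hsrc w).1 hw
    simpa [map_fst_skewLift] using hβ
  · rintro ⟨β, g⟩ hβ
    exact (hsrc _).2 ⟨β, g, hβ, rfl⟩
end

section
/- Let (E, L) be a labeled graph, G a group, and c, d : E^1 → G label consistent functions. Then the set T = { (v, 1_G) : v ∈ E^0 } is a fundamental domain for the left translation action ((E ×_c G, L_d), G, τ). -/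
/-! An edge `(e, g)` of `E ×_c Γ` with range in `T` has `g = (c e)⁻¹`, and one with source in `T`
has `g = 1`; label consistency makes both `g` and the label `(ℒ e, g * d e)` functions of `ℒ e`
alone. -/

section SkewProduct

variable {V E Λ Γ : Type*} [Group Γ]

theorem existsUnique_snd_eq_one_and_translate_eq (q : V × Γ) :
    ∃! p : V × Γ, p.2 = 1 ∧ ((p.1, q.2 * p.2) : V × Γ) = q := by
  refine ⟨(q.1, 1), ⟨rfl, by simp⟩, ?_⟩
  rintro ⟨v, g⟩ ⟨rfl, hq⟩
  exact Prod.ext (Prod.ext_iff.1 hq).1 rfl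

theorem skewLabel_eq_of_label_eq {ℒ : E → Λ} (D : Λ → Γ) {e f : E} (hef : ℒ e = ℒ f)
    (g : Γ) : skewLabel ℒ (D ∘ ℒ) (e, g) = skewLabel ℒ (D ∘ ℒ) (f, g) := by
  simp [skewLabel, hef]

theorem eq_of_skewGraph_r_snd_eq_one {G : DirGraph V E} {c : E → Γ} {e f : E} {g h : Γ}
    (hcef : c e = c f) (he : ((skewGraph G c).r (e, g)).2 = 1)
    (hf : ((skewGraph G c).r (f, h)).2 = 1) : g = h := by
  simp only [skewGraph] at he hf
  exact mul_right_cancel (he.trans (hcef ▸ hf).symm)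

end SkewProduct

/-- For label consistent `c, d : E¹ → Γ`, the set `T = E⁰ × {1}` is a fundamental
domain for the left translation action on the skew product labeled graph
`(E ×_c Γ, ℒ_d)`: every vertex is the translate of a unique element of `T`, and the
two label conditions (a) and (b) hold for edges with range (resp. source) in `T`. -/
theorem stmt11 {V E Λ Γ : Type*} [Group Γ] (G : DirGraph V E) (ℒ : E → Λ)
    (c d : E → Γ) (C D : Λ → Γ) (hc : c = C ∘ ℒ) (hd : d = D ∘ ℒ) :
    let T : Set (V × Γ) := { p | p.2 = 1 }
    -- T is a transversal for the vertex orbits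
    (∀ q : V × Γ, ∃ h : Γ, ∃! p : V × Γ, p ∈ T ∧ ((p.1, h * p.2) : V × Γ) = q) ∧
    -- condition (a): edges with range in T and labels in the same orbit have equal labels
    (∀ (e f : E) (g h : Γ),
      (skewGraph G c).r (e, g) ∈ T → (skewGraph G c).r (f, h) ∈ T →
      (∃ k : Γ, (((skewLabel ℒ d (e, g)).1, k * (skewLabel ℒ d (e, g)).2) : Λ × Γ) =
        skewLabel ℒ d (f, h)) →
      skewLabel ℒ d (e, g) = skewLabel ℒ d (f, h)) ∧
    -- condition (b): edges with source in T and labels in the same orbit have equal labels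
    (∀ (e f : E) (g h : Γ),
      (skewGraph G c).s (e, g) ∈ T → (skewGraph G c).s (f, h) ∈ T →
      (∃ k : Γ, (((skewLabel ℒ d (e, g)).1, k * (skewLabel ℒ d (e, g)).2) : Λ × Γ) =
        skewLabel ℒ d (f, h)) →
      skewLabel ℒ d (e, g) = skewLabel ℒ d (f, h)) := by
  subst hc hd
  intro T
  refine ⟨fun q => ⟨q.2, existsUnique_snd_eq_one_and_translate_eq q⟩, ?_, ?_⟩
  · rintro e f g h he hf ⟨_, hk⟩
    have hef : ℒ e = ℒ f := congrArg Prod.fst hk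
    rw [eq_of_skewGraph_r_snd_eq_one (G := G) (congrArg C hef) he hf]
    exact skewLabel_eq_of_label_eq D hef h
  · rintro e f g h (rfl : g = 1) (rfl : h = 1) ⟨_, hk⟩
    exact skewLabel_eq_of_label_eq D (congrArg Prod.fst hk) 1
end

section
/- Let ((E, L), G, α) be a free labeled graph action admitting a fundamental domain T. Choose the section η^0 sending each vertex orbit to its unique representative in T, and let η^1, η^A and c, d : (E/G)^1 → G be defined as in the Gross–Tucker construction (so that α_{c(Ge)}(η^0(r(Ge))) = r(η^1(Ge)) and α_{d(Ge)}(η^A((L/G)(Ge))) = L(η^1(Ge))). Then both c and d are label consistent: if (L/G)(Ge) = (L/G)(Gf) then c(Ge) = c(Gf) and d(Ge) = d(Gf). -/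
variable {Γ V E Λ : Type*} [Group Γ] {G : DirGraph V E} {ℒ : E → Λ}

/-!
Write `ē` for the edge orbit of `e` and `e' = η¹(ē)`. Since `s(e') ∈ T` and the labels of
`e'` and `f'` lie in one letter orbit whenever those of `e` and `f` do, condition (b) gives
`ℒ e' = ℒ f'`; freeness on letters then forces `d(ē) = d(f̄)`. For `c`, translating `e'` by
`c(ē)⁻¹` moves its range into `T`, so condition (a) identifies `c(ē)⁻¹ ℒ e'` with
`c(f̄)⁻¹ ℒ e'`, and freeness on letters again gives `c(ē) = c(f̄)`.
-/

namespace MonoidHom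

variable {X : Type*} (φ : Γ →* Equiv.Perm X)

theorem equivalence_exists_perm_apply_eq : Equivalence (fun x y : X => ∃ g, φ g x = y) where
  refl _ := ⟨1, by simp⟩
  symm := by
    rintro x y ⟨g, rfl⟩
    exact ⟨g⁻¹, by simp⟩
  trans := by
    rintro x y z ⟨g, rfl⟩ ⟨h, rfl⟩
    exact ⟨h * g, by simp⟩

theorem exists_perm_apply_eq_of_quot_mk_eq {x y : X}
    (h : Quot.mk (fun x y : X => ∃ g, φ g x = y) x = Quot.mk _ y) : ∃ g, φ g x = y :=
  (φ.equivalence_exists_perm_apply_eq.eqvGen_iff).mp (Quot.eqvGen_exact h)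

theorem perm_apply_left_injective_of_free (hfree : ∀ g x, φ g x = x → g = 1) (x : X) :
    Function.Injective (φ · x) := by
  intro g h (hgh : φ g x = φ h x)
  have : φ (h⁻¹ * g) x = x := by simp [hgh]
  exact (inv_mul_eq_one.mp (hfree _ _ this)).symm

end MonoidHom

namespace LGAction

variable (α : LGAction Γ V E Λ G ℒ)

theorem orbE_of_quot_mk_eq {e f : E} (h : Quot.mk (orbE α) e = Quot.mk (orbE α) f) :
    orbE α e f :=
  α.onE.exists_perm_apply_eq_of_quot_mk_eq h

theorem orbA_label_of_orbE {e f : E} (h : orbE α e f) : orbA α (ℒ e) (ℒ f) := by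
  obtain ⟨g, rfl⟩ := h
  exact ⟨g, (α.compat_l g e).symm⟩

theorem orbA_label_of_orbE_of_orbE {e e' f f' : E} (he : orbE α e e') (hf : orbE α f f')
    (hef : orbA α (ℒ e) (ℒ f)) : orbA α (ℒ e') (ℒ f') :=
  have hA := α.onA.equivalence_exists_perm_apply_eq
  hA.trans (hA.symm (α.orbA_label_of_orbE he)) (hA.trans hef (α.orbA_label_of_orbE hf))

theorem eq_of_label_eq_of_range_eq_translate (hfreeA : ∀ (g : Γ) (a : Λ), α.onA g a = a → g = 1)
    {T : Set V} (hTa : ∀ e f : E, G.r e ∈ T → G.r f ∈ T →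
      (∃ g : Γ, α.onA g (ℒ e) = ℒ f) → ℒ e = ℒ f)
    {e f : E} {g h : Γ} {v w : V} (hv : v ∈ T) (hw : w ∈ T)
    (hge : α.onV g v = G.r e) (hhf : α.onV h w = G.r f) (hl : ℒ e = ℒ f) : g = h := by
  have hrange {k : Γ} {u : V} {x : E} (hkx : α.onV k u = G.r x) :
      G.r (α.onE k⁻¹ x) = u := by
    rw [← α.compat_r, ← hkx, ← Equiv.Perm.mul_apply, ← map_mul, inv_mul_cancel, map_one,
      Equiv.Perm.one_apply]
  have hlabels : α.onA g⁻¹ (ℒ e) = α.onA h⁻¹ (ℒ e) := by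
    have := hTa _ _ (hrange hge ▸ hv) (hrange hhf ▸ hw) ⟨h⁻¹ * g, by
      rw [α.compat_l, α.compat_l, hl, ← Equiv.Perm.mul_apply, ← map_mul, mul_inv_cancel_right]⟩
    rwa [α.compat_l, α.compat_l, ← hl] at this
  exact inv_injective (α.onA.perm_apply_left_injective_of_free hfreeA _ hlabels)

end LGAction

theorem stmt12_general (α : LGAction Γ V E Λ G ℒ)
    (hfreeA : ∀ (g : Γ) (a : Λ), α.onA g a = a → g = 1)
    (T : Set V)
    -- fundamental domain condition (a):
    (hTa : ∀ e f : E, G.r e ∈ T → G.r f ∈ T →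
      (∃ g : Γ, α.onA g (ℒ e) = ℒ f) → ℒ e = ℒ f)
    -- fundamental domain condition (b):
    (hTb : ∀ e f : E, G.s e ∈ T → G.s f ∈ T →
      (∃ g : Γ, α.onA g (ℒ e) = ℒ f) → ℒ e = ℒ f)
    -- the section η⁰ of the vertex quotient map, with values in T:
    (η0 : Quot (orbV α) → V)
    (hη0T : ∀ x, η0 x ∈ T)
    -- the section η¹ of the edge quotient map compatible with η⁰:
    (η1 : Quot (orbE α) → E)
    (hη1 : ∀ x, Quot.mk (orbE α) (η1 x) = x)
    (hη1s : ∀ e : E, G.s (η1 (Quot.mk (orbE α) e)) = η0 (Quot.mk (orbV α) (G.s e)))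
    -- the section η^Λ of the alphabet quotient map:
    (ηA : Quot (orbA α) → Λ)
    -- the Gross–Tucker functions c and d:
    (c d : Quot (orbE α) → Γ)
    (hcdef : ∀ e : E,
      α.onV (c (Quot.mk (orbE α) e)) (η0 (Quot.mk (orbV α) (G.r e))) =
        G.r (η1 (Quot.mk (orbE α) e)))
    (hddef : ∀ e : E,
      α.onA (d (Quot.mk (orbE α) e)) (ηA (Quot.mk (orbA α) (ℒ e))) =
        ℒ (η1 (Quot.mk (orbE α) e))) :
    ∀ e f : E, (∃ g : Γ, α.onA g (ℒ e) = ℒ f) →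
      c (Quot.mk (orbE α) e) = c (Quot.mk (orbE α) f) ∧
      d (Quot.mk (orbE α) e) = d (Quot.mk (orbE α) f) := by
  intro e f hef
  have hrep (x : E) : orbE α x (η1 (Quot.mk (orbE α) x)) :=
    α.orbE_of_quot_mk_eq (hη1 _).symm
  have hlabel : ℒ (η1 (Quot.mk (orbE α) e)) = ℒ (η1 (Quot.mk (orbE α) f)) :=
    hTb _ _ (hη1s e ▸ hη0T _) (hη1s f ▸ hη0T _)
      (α.orbA_label_of_orbE_of_orbE (hrep e) (hrep f) hef)
  refine ⟨α.eq_of_label_eq_of_range_eq_translate hfreeA hTa (hη0T _) (hη0T _)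
    (hcdef e) (hcdef f) hlabel, ?_⟩
  have hηA_eq : ηA (Quot.mk (orbA α) (ℒ e)) = ηA (Quot.mk (orbA α) (ℒ f)) :=
    congrArg ηA (Quot.sound hef)
  refine α.onA.perm_apply_left_injective_of_free hfreeA (ηA (Quot.mk (orbA α) (ℒ e))) ?_
  dsimp only
  rw [hddef e, hlabel, ← hddef f, hηA_eq]

/-- If a free labeled graph action admits a fundamental domain `T`, and the sections
`η⁰ (into T), η¹, η^Λ` and the functions `c, d` are chosen as in the Gross–Tucker
construction, then `c` and `d` are label consistent: they depend only on the quotient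
label of an edge orbit. -/
theorem stmt12 (α : LGAction Γ V E Λ G ℒ)
    (hfreeV : ∀ (g : Γ) (v : V), α.onV g v = v → g = 1)
    (hfreeA : ∀ (g : Γ) (a : Λ), α.onA g a = a → g = 1)
    (T : Set V)
    -- T meets each vertex orbit in exactly one point:
    (hT : ∀ v : V, ∃ g : Γ, ∃! w : V, w ∈ T ∧ α.onV g w = v)
    -- fundamental domain condition (a):
    (hTa : ∀ e f : E, G.r e ∈ T → G.r f ∈ T →
      (∃ g : Γ, α.onA g (ℒ e) = ℒ f) → ℒ e = ℒ f)
    -- fundamental domain condition (b):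
    (hTb : ∀ e f : E, G.s e ∈ T → G.s f ∈ T →
      (∃ g : Γ, α.onA g (ℒ e) = ℒ f) → ℒ e = ℒ f)
    -- the section η⁰ of the vertex quotient map, with values in T:
    (η0 : Quot (orbV α) → V)
    (hη0 : ∀ x, Quot.mk (orbV α) (η0 x) = x) (hη0T : ∀ x, η0 x ∈ T)
    -- the section η¹ of the edge quotient map compatible with η⁰:
    (η1 : Quot (orbE α) → E)
    (hη1 : ∀ x, Quot.mk (orbE α) (η1 x) = x)
    (hη1s : ∀ e : E, G.s (η1 (Quot.mk (orbE α) e)) = η0 (Quot.mk (orbV α) (G.s e)))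
    -- the section η^Λ of the alphabet quotient map:
    (ηA : Quot (orbA α) → Λ)
    (hηA : ∀ x, Quot.mk (orbA α) (ηA x) = x)
    -- the Gross–Tucker functions c and d:
    (c d : Quot (orbE α) → Γ)
    (hcdef : ∀ e : E,
      α.onV (c (Quot.mk (orbE α) e)) (η0 (Quot.mk (orbV α) (G.r e))) =
        G.r (η1 (Quot.mk (orbE α) e)))
    (hddef : ∀ e : E,
      α.onA (d (Quot.mk (orbE α) e)) (ηA (Quot.mk (orbA α) (ℒ e))) =
        ℒ (η1 (Quot.mk (orbE α) e))) :
    ∀ e f : E, (∃ g : Γ, α.onA g (ℒ e) = ℒ f) →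
      c (Quot.mk (orbE α) e) = c (Quot.mk (orbE α) f) ∧
      d (Quot.mk (orbE α) e) = d (Quot.mk (orbE α) f) :=
  stmt12_general α hfreeA T hTa hTb η0 hη0T η1 hη1 hη1s ηA c d hcdef hddef
end

section
/- For the labeled graph action of ℤ on the labeled graph (E, L) of Example 7.3(i) (the ladder graph with vertices (v,n), (w,n) for n ∈ ℤ, edges (v,n)→(v,n+1) labeled (1,n), (v,n)→(w,n+1) labeled (0,n), (w,n)→(v,n+1) labeled (0,n−1), (w,n)→(w,n+1) labeled (1,n+2), with ℤ acting by translation in the second coordinate of vertices, edges, and labels), no fundamental domain in the sense of labeled graph actions exists: every transversal T of the vertex orbits fails condition (b). -/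
/-- The ladder graph: vertices `(v, n)` and `(w, n)` for `n ∈ ℤ` (we encode `v` as
`false` and `w` as `true`); the edge `(b, b', n)` goes from `(b, n)` to `(b', n+1)`. -/
def ladderGraph : DirGraph (Bool × ℤ) (Bool × Bool × ℤ) where
  r e := (e.2.1, e.2.2 + 1)
  s e := (e.1, e.2.2)

/-- The labeling over the alphabet `{0, 1} × ℤ` (the bit `0` encoded as `false`, `1` as
`true`): `(v,n) → (v,n+1)` is labeled `(1, n)`; `(v,n) → (w,n+1)` is labeled `(0, n)`;
`(w,n) → (v,n+1)` is labeled `(0, n-1)`; `(w,n) → (w,n+1)` is labeled `(1, n+2)`. -/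
def ladderLabel : Bool × Bool × ℤ → Bool × ℤ := fun e =>
  match e with
  | (false, false, n) => (true, n)
  | (false, true, n) => (false, n)
  | (true, false, n) => (false, n - 1)
  | (true, true, n) => (true, n + 2)

theorem exists_add_eq_iff_fst_eq {α : Type*} (x y : α × ℤ) :
    (∃ k : ℤ, ((x.1, x.2 + k) : α × ℤ) = y) ↔ x.1 = y.1 :=
  ⟨fun ⟨_, h⟩ => by rw [← h], fun h => ⟨y.2 - x.2, Prod.ext h (by simp)⟩⟩

theorem exists_mem_of_isTransversal {T : Set (Bool × ℤ)}
    (hT : ∀ v : Bool × ℤ, ∃! w : Bool × ℤ, w ∈ T ∧ ∃ k : ℤ, ((w.1, w.2 + k) : Bool × ℤ) = v)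
    (b : Bool) : ∃ n : ℤ, (b, n) ∈ T := by
  obtain ⟨⟨c, n⟩, ⟨hcT, hc⟩, -⟩ := hT (b, 0)
  obtain rfl : c = b := (exists_add_eq_iff_fst_eq _ _).1 hc
  exact ⟨n, hcT⟩

theorem ladderLabel_fst (b : Bool) (j k : ℤ) :
    (ladderLabel (false, b, j)).1 = (ladderLabel (true, !b, k)).1 := by
  cases b <;> rfl

/-- Equal labels for both choices of `b` would force both `j = k + 2` and `j = k - 1`. -/
theorem exists_ladderLabel_ne (j k : ℤ) :
    ∃ b : Bool, ladderLabel (false, b, j) ≠ ladderLabel (true, !b, k) := by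
  by_cases h : j = k + 2
  · refine ⟨true, ?_⟩
    simp only [ladderLabel, Bool.not_true, ne_eq, Prod.mk.injEq, true_and]
    omega
  · exact ⟨false, by simpa [ladderLabel] using h⟩

/-- For the free `ℤ`-action by translation in the second coordinate of vertices,
edges and labels, no fundamental domain exists: every transversal `T` of the vertex
orbits fails condition (b), i.e. there are edges `e, f` with sources in `T` whose
labels lie in the same `ℤ`-orbit but are distinct. -/
theorem stmt17 :
    ∀ T : Set (Bool × ℤ),
      (∀ v : Bool × ℤ, ∃! w : Bool × ℤ, w ∈ T ∧ ∃ k : ℤ, ((w.1, w.2 + k) : Bool × ℤ) = v) →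
      ∃ e f : Bool × Bool × ℤ,
        ladderGraph.s e ∈ T ∧ ladderGraph.s f ∈ T ∧
        (∃ k : ℤ, (((ladderLabel e).1, (ladderLabel e).2 + k) : Bool × ℤ) = ladderLabel f) ∧
        ladderLabel e ≠ ladderLabel f := by
  intro T hT
  obtain ⟨j, hj⟩ := exists_mem_of_isTransversal hT false
  obtain ⟨k, hk⟩ := exists_mem_of_isTransversal hT true
  obtain ⟨b, hne⟩ := exists_ladderLabel_ne j k
  exact ⟨(false, b, j), (true, !b, k), hj, hk,
    (exists_add_eq_iff_fst_eq _ _).2 (ladderLabel_fst b j k), hne⟩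
end
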